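/- arXiv:1105.2556 — 4 statements merged into one kernel-verified Lean document; each statement's English description precedes it below -/
import Mathlib

section
/- Let p ≥ 1 be an integer, let γ be any full cycle in the symmetric group S_p (a permutation whose cycle type is the single part p), and let σ ∈ S_p be geodesic with respect to γ, i.e. |σ| + |σ⁻¹γ| = p − 1. Then 1 + e(σ) = #(σγ), where e(σ) is the number of orbits of σ of even cardinality and #(σγ) is the number of orbits (cycles, counting fixed points) of the permutation σγ. -/
/-!
Write `|π|` for `absLength π` (the number of transpositions needed for `π`) and `π.skip x` for
`π` with `x` cut out of its cycle. For a cycle `γ` the claim reads `e(σ) + |σγ| = |γ|`; we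
induct on `|γ|`. Since `|σ| + |σ⁻¹γ| = |γ| < #supp γ` while `#supp π ≤ 2|π|`, some point `a`
moved by `γ` is fixed by `σ` or by `σ⁻¹γ`, and cutting one point out of both `σ` and `γ` keeps
`σ` geodesic. If `σ a = a`, cutting `a` lowers `|σγ|` and `|γ|` by one. If `σ a = γ a = b`, we
cut `a` and then `b`. This either shortens the block of `σ` through `a` by two, keeping its
parity, or deletes a block `{a, b}`, lowering `e(σ)` and `|σ|` by one. In both cases `σγ` gets
cut at `a` and `b` as well, and `e(σ) + |σγ|` drops by two, like `|γ|`.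
-/

open scoped Classical

/-- Number of orbits (cycles, counting fixed points) of a permutation of `Fin p`. -/
def numOrbits {p : ℕ} (σ : Equiv.Perm (Fin p)) : ℕ :=
  (p - σ.cycleType.sum) + σ.cycleType.card

/-- Number of orbits of even cardinality of a permutation of `Fin p`. -/
def numEvenOrbits {p : ℕ} (σ : Equiv.Perm (Fin p)) : ℕ :=
  (σ.cycleType.filter Even).card

/-- Length of a permutation: minimal number of transpositions, `|σ| = p - #σ`. -/
def permLength {p : ℕ} (σ : Equiv.Perm (Fin p)) : ℕ := p - numOrbits σ

/-- `σ` is geodesic with respect to the full cycle `γ`: `|σ| + |σ⁻¹γ| = p - 1`. -/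
def IsGeodesic {p : ℕ} (γ σ : Equiv.Perm (Fin p)) : Prop :=
  permLength σ + permLength (σ⁻¹ * γ) = p - 1

/-- The moments `M_p(m,n) = Σ_{σ geodesic} m^{#σ} n^{e(σ)}`, with `M_0 = 1`. -/
noncomputable def M (m n : ℝ) : ℕ → ℝ
  | 0 => 1
  | (p + 1) => ∑ σ : Equiv.Perm (Fin (p + 1)),
      if IsGeodesic (finRotate (p + 1)) σ then m ^ numOrbits σ * n ^ numEvenOrbits σ else 0

open Finset

namespace Equiv.Perm

variable {α : Type*} [DecidableEq α]

/-- `x` becomes a fixed point and `π⁻¹ x ↦ π x`. -/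
def skip (π : Perm α) (x : α) : Perm α := swap x (π x) * π

@[simp]
theorem skip_apply_self (π : Perm α) (x : α) : π.skip x x = x := by
  simp [skip]

theorem skip_of_apply_eq_self {π : Perm α} {x : α} (h : π x = x) : π.skip x = π := by
  rw [skip, h, swap_self]
  exact one_mul π

theorem skip_apply_of_ne {π : Perm α} {x y : α} (hyx : y ≠ x) (hπy : π y ≠ x) :
    π.skip x y = π y := by
  rw [skip, mul_apply, swap_apply_of_ne_of_ne hπy fun h => hyx (π.injective h)]

theorem skip_apply_ne_self {π : Perm α} {x y : α} (hyx : y ≠ x) (hy : π y ≠ y) (hxy : π x ≠ y) :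
    π.skip x y ≠ y := by
  rw [skip, mul_apply, Ne, swap_apply_eq_iff, swap_apply_of_ne_of_ne hyx (Ne.symm hxy)]
  exact hy

theorem mul_skip_of_apply_eq_self {f : Perm α} {x : α} (h : f x = x) (π : Perm α) :
    f * π.skip x = (f * π).skip x := by
  rw [skip, skip, ← mul_assoc, mul_swap_eq_swap_mul, h, mul_assoc, mul_apply]

theorem skip_skip_mul_skip_eq {σ γ : Perm α} {a : α} (h : σ a = γ a) :
    (σ.skip a).skip (γ a) * γ.skip a = (σ * γ).skip a := by
  set b := γ a
  set c := σ b
  have hword : swap b (swap a b c) * swap a b * swap b c = swap a c := by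
    by_cases hab : a = b
    · have hc : c = a := by rw [show c = σ b from rfl, ← hab, h, hab]
      rw [hc, ← hab]
      simp [Perm.one_def]
    by_cases hca : c = a
    · simp [hca, swap_comm b a]
    have hcb : c ≠ b := fun hcb => hab (σ.injective (h.trans hcb.symm))
    rw [swap_apply_of_ne_of_ne hca hcb, swap_mul_swap_mul_swap hab (Ne.symm hca), swap_comm]
  have hskip : σ.skip a b = swap a b c := by rw [skip, h]; rfl
  calc (σ.skip a).skip b * γ.skip a
      = swap b (swap a b c) * swap a b * (σ * swap a b) * γ := by
        rw [skip, hskip, skip, skip, h]; simp only [mul_assoc]; rfl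
    _ = (σ * γ).skip a := by
        rw [mul_swap_eq_swap_mul σ a b, h, skip, mul_apply, ← mul_assoc, ← mul_assoc, hword]

theorem skip_skip_mul_skip_skip {σ γ : Perm α} {a : α} (h : σ a = γ a) :
    (σ.skip a).skip (γ a) * (γ.skip a).skip (γ a) = ((σ * γ).skip a).skip (γ a) := by
  rw [mul_skip_of_apply_eq_self (skip_apply_self _ _), skip_skip_mul_skip_eq h]

theorem IsCycle.skip_eq_one {c : Perm α} (hc : c.IsCycle) {x : α} (hx : c x ≠ x)
    (h2 : c (c x) = x) : c.skip x = 1 := by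
  rw [skip]
  nth_rw 2 [hc.eq_swap_of_apply_apply_eq_self hx h2]
  exact swap_mul_self _ _

theorem IsCycle.isCycle_skip_or_eq_one {c : Perm α} (hc : c.IsCycle) {x : α} (hx : c x ≠ x) :
    (c.skip x).IsCycle ∨ c.skip x = 1 := by
  by_cases h2 : c (c x) = x
  · exact Or.inr (hc.skip_eq_one hx h2)
  · exact Or.inl (hc.swap_mul hx h2)

theorem Disjoint.skip_mul {r c : Perm α} (h : Disjoint r c) {x : α} (hx : c x ≠ x) :
    (r * c).skip x = r * c.skip x := by
  have hrx : r x = x := (h x).resolve_right hx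
  have hrcx : r (c x) = c x := (h (c x)).resolve_right fun h' => hx (c.injective h')
  rw [skip, skip, mul_apply, hrcx, ← mul_assoc, ← mul_assoc, mul_swap_eq_swap_mul, hrx, hrcx]

variable [Fintype α]

def absLength (π : Perm α) : ℕ := #π.support - Multiset.card π.cycleType

def numEvenCycles (π : Perm α) : ℕ := Multiset.card (π.cycleType.filter Even)

theorem two_mul_card_cycleType_le (π : Perm α) : 2 * Multiset.card π.cycleType ≤ #π.support := by
  rw [← sum_cycleType]
  simpa [mul_comm] using Multiset.card_nsmul_le_sum fun _ hx => two_le_of_mem_cycleType hx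

theorem card_support_le_two_mul_absLength (π : Perm α) : #π.support ≤ 2 * absLength π := by
  have := two_mul_card_cycleType_le π
  unfold absLength
  omega

@[simp]
theorem absLength_one : absLength (1 : Perm α) = 0 := by
  simp [absLength]

theorem absLength_eq_zero_iff {π : Perm α} : absLength π = 0 ↔ π = 1 := by
  refine ⟨fun h => ?_, fun h => h ▸ absLength_one⟩
  have := card_support_le_two_mul_absLength π
  rw [← support_eq_empty_iff, ← card_eq_zero]
  omega

theorem Disjoint.absLength_mul {f g : Perm α} (h : Disjoint f g) :
    absLength (f * g) = absLength f + absLength g := by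
  have hf := two_mul_card_cycleType_le f
  have hg := two_mul_card_cycleType_le g
  simp only [absLength, h.card_support_mul, h.cycleType_mul, Multiset.card_add]
  omega

theorem Disjoint.numEvenCycles_mul {f g : Perm α} (h : Disjoint f g) :
    numEvenCycles (f * g) = numEvenCycles f + numEvenCycles g := by
  simp [numEvenCycles, h.cycleType_mul, Multiset.filter_add]

theorem IsCycle.absLength_add_one {c : Perm α} (hc : c.IsCycle) :
    absLength c + 1 = #c.support := by
  have := hc.two_le_card_support
  simp only [absLength, hc.cycleType, Multiset.card_singleton]
  omega

theorem numEvenCycles_eq_absLength_mod_two {c : Perm α} (hc : c.IsCycle ∨ c = 1) :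
    numEvenCycles c = absLength c % 2 := by
  rcases hc with hc | rfl
  · have := hc.absLength_add_one
    have := hc.two_le_card_support
    simp only [numEvenCycles, hc.cycleType, Multiset.filter_singleton, Nat.even_iff]
    split_ifs <;>
      simp only [Multiset.card_singleton, Multiset.empty_eq_zero, Multiset.card_zero] <;> omega
  · simp [numEvenCycles]

theorem IsCycle.absLength_skip {c : Perm α} (hc : c.IsCycle) {x : α} (hx : c x ≠ x) :
    absLength (c.skip x) + 1 = absLength c := by
  have hc1 := hc.absLength_add_one
  by_cases h2 : c (c x) = x
  · have hcard : #c.support = 2 := by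
      rw [hc.eq_swap_of_apply_apply_eq_self hx h2, card_support_swap hx.symm]
    rw [hc.skip_eq_one hx h2, absLength_one]
    omega
  · have := (hc.swap_mul hx h2).absLength_add_one
    rw [support_swap_mul_eq c x h2, card_sdiff_of_subset (by simpa using hx)] at this
    simp only [card_singleton] at this
    rw [skip]
    omega

theorem Disjoint.skip_right {r c : Perm α} (h : Disjoint r c) (x : α) : Disjoint r (c.skip x) := by
  rw [disjoint_iff_disjoint_support] at h ⊢
  exact h.mono_right fun y hy => (mem_support_swap_mul_imp_mem_support_ne hy).1

theorem exists_disjoint_mul_isCycle {π : Perm α} {x : α} (hx : π x ≠ x) :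
    ∃ r c : Perm α, Disjoint r c ∧ c.IsCycle ∧ c x = π x ∧ c (π x) = π (π x) ∧ π = r * c :=
  ⟨π * (π.cycleOf x)⁻¹, π.cycleOf x,
    disjoint_mul_inv_of_mem_cycleFactorsFinset
      (cycleOf_mem_cycleFactorsFinset_iff.mpr (mem_support.mpr hx)),
    isCycle_cycleOf π hx, cycleOf_apply_self π x, cycleOf_apply_apply_self π x,
    (inv_mul_cancel_right π _).symm⟩

theorem absLength_skip {π : Perm α} {x : α} (hx : π x ≠ x) :
    absLength (π.skip x) + 1 = absLength π := by
  obtain ⟨r, c, hd, hc, hcx, -, rfl⟩ := exists_disjoint_mul_isCycle hx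
  have hcx' : c x ≠ x := hcx ▸ hx
  rw [hd.skip_mul hcx', (hd.skip_right x).absLength_mul, hd.absLength_mul,
    ← hc.absLength_skip hcx', add_assoc]

theorem numEvenCycles_skip_of_apply_apply_eq {π : Perm α} {x : α} (hx : π x ≠ x)
    (h2 : π (π x) = x) : numEvenCycles (π.skip x) + 1 = numEvenCycles π := by
  obtain ⟨r, c, hd, hc, hcx, hccx, rfl⟩ := exists_disjoint_mul_isCycle hx
  have hcx' : c x ≠ x := hcx ▸ hx
  have hc1 := hc.skip_eq_one hcx' (by rw [hcx, hccx, h2])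
  have hlen := hc.absLength_skip hcx'
  rw [hd.skip_mul hcx', hc1, mul_one, hd.numEvenCycles_mul,
    numEvenCycles_eq_absLength_mod_two (Or.inl hc), ← hlen, hc1, absLength_one]

theorem numEvenCycles_skip_skip {π : Perm α} {x : α} (hx : π x ≠ x) (h2 : π (π x) ≠ x) :
    numEvenCycles ((π.skip x).skip (π x)) = numEvenCycles π := by
  obtain ⟨r, c, hd, hc, hcx, hccx, rfl⟩ := exists_disjoint_mul_isCycle hx
  have hcx' : c x ≠ x := hcx ▸ hx
  have hc2 : c (c x) ≠ x := by rwa [hcx, hccx]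
  have hc₁ : (c.skip x).IsCycle := hc.swap_mul hcx' hc2
  have hc₁x : c.skip x (c x) ≠ c x := by
    rw [skip_apply_of_ne hcx' hc2]
    exact fun h => hcx' (c.injective h)
  have hlen₁ := hc.absLength_skip hcx'
  have hlen₂ := hc₁.absLength_skip hc₁x
  rw [hd.skip_mul hcx', ← hcx, (hd.skip_right x).skip_mul hc₁x, hd.numEvenCycles_mul,
    ((hd.skip_right x).skip_right _).numEvenCycles_mul,
    numEvenCycles_eq_absLength_mod_two (hc₁.isCycle_skip_or_eq_one hc₁x),
    numEvenCycles_eq_absLength_mod_two (Or.inl hc)]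
  omega

theorem absLength_swap_mul_le (π : Perm α) (x y : α) :
    absLength (swap x y * π) ≤ absLength π + 1 := by
  induction hn : absLength π using Nat.strong_induction_on generalizing π with
  | _ n ih =>
  rcases eq_or_ne x y with rfl | hxy
  · simp [swap_self, Perm.one_def.symm, hn]
  obtain ⟨w, rfl⟩ := π.surjective y
  by_cases hwx : w = x
  · subst hwx
    have := absLength_skip hxy.symm
    rw [skip] at this
    omega
  have hρw : (swap x (π w) * π) w = x := by simp
  have hρ := absLength_skip (hρw.trans_ne (Ne.symm hwx))
  rw [skip, hρw] at hρ
  by_cases hπw : π w = w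
  · rw [hπw] at hρ ⊢
    rw [swap_comm, swap_mul_self_mul] at hρ
    omega
  have hword : swap w x * (swap x (π w) * π) = swap x (π w) * π.skip w := by
    rw [skip, ← mul_assoc, ← mul_assoc, mul_swap_eq_swap_mul (swap x (π w)),
      swap_apply_of_ne_of_ne hwx (Ne.symm hπw), swap_apply_right]
  rw [hword] at hρ
  have hskip := absLength_skip hπw
  have := ih _ (by omega) (π.skip w) rfl
  omega

theorem absLength_mul_le (f g : Perm α) : absLength (f * g) ≤ absLength f + absLength g := by
  induction hn : absLength f using Nat.strong_induction_on generalizing f with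
  | _ n ih =>
  rcases eq_or_ne f 1 with rfl | hf
  · simp
  obtain ⟨x, hx⟩ : ∃ x, f x ≠ x := by
    by_contra! h
    exact hf (ext h)
  have hskip := absLength_skip hx
  have hfg : f * g = swap x (f x) * (f.skip x * g) := by
    rw [skip, mul_assoc, swap_mul_self_mul]
  rw [hfg]
  have := absLength_swap_mul_le (f.skip x * g) x (f x)
  have := ih _ (by omega) (f.skip x) rfl
  omega

theorem absLength_inv_skip_mul_skip_le (f g : Perm α) (b : α) :
    absLength ((f.skip b)⁻¹ * g.skip b) ≤ absLength (f⁻¹ * g) := by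
  set ρ := f⁻¹ * g
  set y := f⁻¹ b
  set z := ρ b
  have hword : (f.skip b)⁻¹ * g.skip b = swap y b * (swap y z * ρ) := by
    rw [skip, skip, mul_inv_rev, swap_inv, mul_assoc, ← mul_assoc f⁻¹, mul_swap_eq_swap_mul,
      inv_eq_iff_eq.mpr rfl, mul_assoc, ← mul_assoc f⁻¹, mul_swap_eq_swap_mul]
    simp only [mul_assoc, ρ, z, y, mul_apply]
  rw [hword]
  by_cases hzb : z = b
  · rw [hzb, swap_mul_self_mul]
  have hskip : absLength (swap b z * ρ) + 1 = absLength ρ := absLength_skip hzb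
  by_cases hyb : y = b
  · rw [hyb, swap_self, ← Perm.one_def, one_mul]
    omega
  have h3 : swap y b * swap y z = swap y z * swap z b := by
    rw [mul_swap_eq_swap_mul (swap y z) z b, swap_apply_right,
      swap_apply_of_ne_of_ne (Ne.symm hyb) (Ne.symm hzb)]
  rw [← mul_assoc, h3, mul_assoc, swap_comm z b]
  have := absLength_swap_mul_le (swap b z * ρ) y z
  omega

/-- `σ ≤ γ` in the absolute order: `σ` lies on a geodesic from `1` to `γ`. -/
def AbsLE (σ γ : Perm α) : Prop := absLength σ + absLength (σ⁻¹ * γ) = absLength γ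

theorem AbsLE.skip {σ γ : Perm α} (h : AbsLE σ γ) {b : α} (hb : γ b ≠ b) :
    AbsLE (σ.skip b) (γ.skip b) := by
  unfold AbsLE at h ⊢
  have hγ := absLength_skip hb
  have htri := absLength_mul_le (σ.skip b) ((σ.skip b)⁻¹ * γ.skip b)
  rw [mul_inv_cancel_left] at htri
  by_cases hσb : σ b = b
  · have hτb : (σ⁻¹ * γ) b ≠ b := fun h' => hb ((inv_eq_iff_eq.mp h').trans hσb)
    have hτ := absLength_skip hτb
    rw [skip_of_apply_eq_self hσb, mul_skip_of_apply_eq_self (inv_eq_iff_eq.mpr hσb.symm)]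
    rw [skip_of_apply_eq_self hσb] at htri
    omega
  · have := absLength_skip hσb
    have := absLength_inv_skip_mul_skip_le σ γ b
    omega

theorem AbsLE.eq_of_absLength_eq_one {σ γ : Perm α} (h : AbsLE σ γ) (hγ : absLength γ = 1)
    (hσ : σ ≠ 1) : σ = γ := by
  have := mt absLength_eq_zero_iff.mp hσ
  exact inv_mul_eq_one.mp (absLength_eq_zero_iff.mp (by unfold AbsLE at h; omega))

theorem exists_mem_apply_eq_self_of_absLength_add_lt (σ τ : Perm α) (S : Finset α)
    (h : absLength σ + absLength τ < #S) : ∃ x ∈ S, σ x = x ∨ τ x = x := by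
  by_contra! hS
  have hσ := card_le_card fun x hx => mem_support.mpr (hS x hx).1
  have hτ := card_le_card fun x hx => mem_support.mpr (hS x hx).2
  have := card_support_le_two_mul_absLength σ
  have := card_support_le_two_mul_absLength τ
  omega

theorem numEvenCycles_add_absLength_mul_skip_skip {σ γ : Perm α} {a : α} (hσa : σ a = γ a)
    (hγa : γ (γ a) ≠ a) :
    numEvenCycles ((σ.skip a).skip (γ a)) +
        absLength ((σ.skip a).skip (γ a) * (γ.skip a).skip (γ a)) + 2 =
      numEvenCycles σ + absLength (σ * γ) := by
  rw [skip_skip_mul_skip_skip hσa, ← hσa]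
  have hab : σ a ≠ a := fun h => by
    have hγa1 : γ a = a := hσa ▸ h
    exact hγa (by rw [hγa1, hγa1])
  have hρb : (σ * γ) (σ a) ≠ σ a := by
    rw [mul_apply, Ne, σ.injective.eq_iff, hσa]
    exact hγa
  by_cases hσ2 : σ (σ a) = a
  · have hρa : (σ * γ) a = a := by rw [mul_apply, ← hσa, hσ2]
    have hfix : σ.skip a (σ a) = σ a := by
      rw [skip, mul_apply, hσ2, swap_apply_left]
    rw [skip_of_apply_eq_self hfix, skip_of_apply_eq_self hρa]
    have := numEvenCycles_skip_of_apply_apply_eq hab hσ2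
    have := absLength_skip hρb
    omega
  · have hρa : (σ * γ) a ≠ a := by rwa [mul_apply, ← hσa]
    have hρa' : ((σ * γ).skip a) (σ a) ≠ σ a :=
      skip_apply_ne_self hab hρb (by rw [mul_apply, ← hσa]; exact fun h => hab (σ.injective h))
    rw [numEvenCycles_skip_skip hab hσ2]
    have := absLength_skip hρa
    have := absLength_skip hρa'
    omega

theorem AbsLE.numEvenCycles_add_absLength_mul {σ γ : Perm α} (hγ : γ.IsCycle ∨ γ = 1)
    (h : AbsLE σ γ) : numEvenCycles σ + absLength (σ * γ) = absLength γ := by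
  induction hn : absLength γ using Nat.strong_induction_on generalizing γ σ with
  | _ n ih =>
  have h' : absLength σ + absLength (σ⁻¹ * γ) = n := hn ▸ h
  obtain hγ | rfl := hγ
  swap
  · obtain rfl : σ = 1 := absLength_eq_zero_iff.mp (by rw [absLength_one] at hn; omega)
    simp [numEvenCycles, ← hn]
  have hsupp := hγ.absLength_add_one
  obtain ⟨a, ha, hσa | hτa⟩ :=
    exists_mem_apply_eq_self_of_absLength_add_lt σ (σ⁻¹ * γ) γ.support (by omega)
  · have hγa : γ a ≠ a := mem_support.mp ha
    have hρa : (σ * γ) a ≠ a := fun h' => hγa (σ.injective (h'.trans hσa.symm))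
    have hγ₁ := hγ.absLength_skip hγa
    have := ih _ (by omega) (hγ.isCycle_skip_or_eq_one hγa) (h.skip hγa) rfl
    rw [skip_of_apply_eq_self hσa, mul_skip_of_apply_eq_self hσa] at this
    have := absLength_skip hρa
    omega
  have hσa : σ a = γ a := (inv_eq_iff_eq.mp hτa).symm
  have hγa : γ a ≠ a := mem_support.mp ha
  by_cases hγ2 : γ (γ a) = a
  · have hswap := hγ.eq_swap_of_apply_apply_eq_self hγa hγ2
    have hγγ : γ * γ = 1 := by rw [hswap]; exact swap_mul_self _ _
    have hcard : #γ.support = 2 := by rw [hswap]; exact card_support_swap hγa.symm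
    obtain rfl := h.eq_of_absLength_eq_one (by omega) fun h1 => hγa (by rw [← hσa, h1, one_apply])
    rw [hγγ, absLength_one, numEvenCycles_eq_absLength_mod_two (Or.inl hγ)]
    omega
  have hγ₁ : (γ.skip a).IsCycle := hγ.swap_mul hγa hγ2
  have hγ₁a : γ.skip a (γ a) ≠ γ a := by
    rw [skip_apply_of_ne hγa hγ2]
    exact fun h' => hγa (γ.injective h')
  have := hγ.absLength_skip hγa
  have := hγ₁.absLength_skip hγ₁a
  have := ih _ (by omega) (hγ₁.isCycle_skip_or_eq_one hγ₁a) ((h.skip hγa).skip hγ₁a) rfl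
  have := numEvenCycles_add_absLength_mul_skip_skip hσa hγ2
  omega

end Equiv.Perm

open Finset Equiv.Perm

theorem numOrbits_add_absLength {p : ℕ} (π : Equiv.Perm (Fin p)) :
    numOrbits π + absLength π = p := by
  have h₁ := two_mul_card_cycleType_le π
  have h₂ : #π.support ≤ p := by simpa using card_le_univ π.support
  rw [numOrbits, sum_cycleType, absLength]
  omega

theorem isCycle_or_eq_one_of_numOrbits_eq_one {p : ℕ} {γ : Equiv.Perm (Fin p)}
    (h : numOrbits γ = 1) : γ.IsCycle ∨ γ = 1 := by
  have : Multiset.card γ.cycleType ≤ 1 := by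
    unfold numOrbits at h
    omega
  rcases Nat.le_one_iff_eq_zero_or_eq_one.mp this with hc | hc
  · exact Or.inr (card_cycleType_eq_zero.mp hc)
  · exact Or.inl (card_cycleType_eq_one.mp hc)

theorem one_add_evenOrbits_eq_numOrbits_mul_general
    (p : ℕ) (γ σ : Equiv.Perm (Fin p))
    (hγ : numOrbits γ = 1) (hσ : IsGeodesic γ σ) :
    1 + numEvenOrbits σ = numOrbits (σ * γ) := by
  have hγp := numOrbits_add_absLength γ
  have hσγ := numOrbits_add_absLength (σ * γ)
  have habs : AbsLE σ γ := by
    have := numOrbits_add_absLength σ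
    have := numOrbits_add_absLength (σ⁻¹ * γ)
    unfold IsGeodesic permLength at hσ
    unfold AbsLE
    omega
  have := habs.numEvenCycles_add_absLength_mul (isCycle_or_eq_one_of_numOrbits_eq_one hγ)
  change 1 + numEvenCycles σ = _
  omega

/-- For `p ≥ 1`, any full cycle `γ ∈ S_p` (a permutation with a single orbit) and any
`σ` geodesic with respect to `γ`, one has `1 + e(σ) = #(σγ)`. -/
theorem one_add_evenOrbits_eq_numOrbits_mul
    (p : ℕ) (hp : 1 ≤ p) (γ σ : Equiv.Perm (Fin p))
    (hγ : numOrbits γ = 1) (hσ : IsGeodesic γ σ) :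
    1 + numEvenOrbits σ = numOrbits (σ * γ) :=
  one_add_evenOrbits_eq_numOrbits_mul_general p γ σ hγ hσ
end

section
/- Fix a real number β > 0 and let ν_β be the measure on ℝ with density f(x) = √(4β − (1−x)²)/(2βπ) on [1−2√β, 1+2√β] and zero elsewhere. Then ν_β is a probability measure, and for every real ξ > 1 + 2√β its Cauchy transform Γ(ξ) = ∫ (ξ − x)⁻¹ dν_β(x) satisfies the quadratic equation β Γ(ξ)² + (1 − ξ) Γ(ξ) + 1 = 0; explicitly, Γ(ξ) = (ξ − 1 − √((ξ−1)² − 4β))/(2β). -/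
/-!
Under `x = 2√β t + 1` the semicircle law becomes the law with density `(2/π)√(1 - t²)` on
`[-1, 1]`, whose mass is `1` because `∫ √(1 - t²) = π/2`. Writing `ξ = 2√β a + 1` with `a > 1`,
the Cauchy transform is `(1/(π√β)) ∫ √(1 - t²)/(a - t) dt`, and the integrand has the elementary
antiderivative `-√(1 - t²) + a arcsin t - √(a² - 1) arcsin ((a t - 1)/(a - t))`, where the Möbius
map `t ↦ (a t - 1)/(a - t)` fixes `±1`.
-/

open MeasureTheory

/-- The semicircle law `SC(1,β)` centered at `1` of variance `β`: the measure on `ℝ` with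
density `√(4β − (1−x)²)/(2βπ)` on `[1 − 2√β, 1 + 2√β]` and zero elsewhere. -/
noncomputable def semicircleLaw (β : ℝ) : Measure ℝ :=
  volume.withDensity fun x => ENNReal.ofReal
    (Set.indicator (Set.Icc (1 - 2 * Real.sqrt β) (1 + 2 * Real.sqrt β))
      (fun x => Real.sqrt (4 * β - (1 - x) ^ 2) / (2 * β * Real.pi)) x)

open Real Set

section DensityOnInterval

variable {E : Type*} [NormedAddCommGroup E] [NormedSpace ℝ E] {f : ℝ → ℝ} {a b : ℝ}

theorem integral_withDensity_ofReal_indicator_Icc (hab : a ≤ b) (hf : Measurable f)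
    (hf₀ : ∀ x ∈ Icc a b, 0 ≤ f x) (g : ℝ → E) :
    ∫ x, g x ∂volume.withDensity (fun x => ENNReal.ofReal ((Icc a b).indicator f x))
      = ∫ x in a..b, f x • g x := by
  have hmeas : Measurable fun x => ((Icc a b).indicator f x).toNNReal :=
    (hf.indicator measurableSet_Icc).real_toNNReal
  have hsmul : ∀ x, ((Icc a b).indicator f x).toNNReal • g x = (Icc a b).indicator (f • g) x := by
    intro x
    by_cases hx : x ∈ Icc a b
    · simp [hx, NNReal.smul_def, Real.coe_toNNReal _ (hf₀ x hx)]
    · simp [hx]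
  rw [intervalIntegral.integral_of_le hab, ← integral_Icc_eq_integral_Ioc,
    ← integral_indicator measurableSet_Icc]
  exact (integral_withDensity_eq_integral_smul hmeas g).trans (by simp only [hsmul]; rfl)

theorem isFiniteMeasure_withDensity_ofReal_indicator_Icc (hf : ContinuousOn f (Icc a b)) :
    IsFiniteMeasure (volume.withDensity fun x => ENNReal.ofReal ((Icc a b).indicator f x)) :=
  isFiniteMeasure_withDensity_ofReal
    (hf.integrableOn_Icc.integrable_indicator measurableSet_Icc).hasFiniteIntegral

end DensityOnInterval

theorem isProbabilityMeasure_of_integral_one {α : Type*} [MeasurableSpace α] {μ : Measure α}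
    [IsFiniteMeasure μ] (h : ∫ _, (1 : ℝ) ∂μ = 1) : IsProbabilityMeasure μ := by
  rw [integral_const, smul_eq_mul, mul_one, measureReal_def,
    ENNReal.toReal_eq_one_iff] at h
  exact ⟨h⟩

section ArcsinAntiderivative

variable {a x : ℝ}

theorem sqrt_one_sub_sq_moebius (ha : 1 ≤ a) (hx : x < a) :
    √(1 - ((a * x - 1) / (a - x)) ^ 2) = √(a ^ 2 - 1) * √(1 - x ^ 2) / (a - x) := by
  have hax : 0 < a - x := sub_pos.2 hx
  have h : 1 - ((a * x - 1) / (a - x)) ^ 2 = (a ^ 2 - 1) * (1 - x ^ 2) / (a - x) ^ 2 := by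
    field_simp
    ring
  rw [h, Real.sqrt_div' _ (sq_nonneg _), Real.sqrt_sq hax.le,
    Real.sqrt_mul (by nlinarith)]

theorem hasDerivAt_arcsin_moebius (ha : 1 < a) (hx : x ∈ Ioo (-1 : ℝ) 1) :
    HasDerivAt (fun y => arcsin ((a * y - 1) / (a - y)))
      (√(a ^ 2 - 1) / ((a - x) * √(1 - x ^ 2))) x := by
  obtain ⟨hx₁, hx₂⟩ := hx
  have hax : 0 < a - x := by linarith
  have hu : HasDerivAt (fun y => (a * y - 1) / (a - y)) ((a ^ 2 - 1) / (a - x) ^ 2) x := by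
    have := (((hasDerivAt_id x).const_mul a).sub_const 1).div
      ((hasDerivAt_id x).const_sub a) hax.ne'
    refine this.congr_deriv ?_
    simp only [id]
    ring
  have hu₁ : -1 < (a * x - 1) / (a - x) := by rw [lt_div_iff₀ hax]; nlinarith
  have hu₂ : (a * x - 1) / (a - x) < 1 := by rw [div_lt_one hax]; nlinarith
  refine ((Real.hasDerivAt_arcsin hu₁.ne' hu₂.ne).comp x hu).congr_deriv ?_
  have hq : 0 < √(a ^ 2 - 1) := Real.sqrt_pos.2 (by nlinarith)
  rw [sqrt_one_sub_sq_moebius ha.le (by linarith)]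
  field_simp
  rw [Real.sq_sqrt (by nlinarith)]

-- Splitting `1 - x² = (a - x)(a + x) - (a² - 1)` gives the three terms of the antiderivative.
theorem hasDerivAt_sqrt_one_sub_sq_div_sub_antideriv (ha : 1 < a) (hx : x ∈ Ioo (-1 : ℝ) 1) :
    HasDerivAt (fun y => -√(1 - y ^ 2) + a * arcsin y
        - √(a ^ 2 - 1) * arcsin ((a * y - 1) / (a - y)))
      (√(1 - x ^ 2) / (a - x)) x := by
  have ⟨hx₁, hx₂⟩ := hx
  have hp : 0 < 1 - x ^ 2 := by nlinarith
  have hax : 0 < a - x := by linarith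
  have hsqrt : HasDerivAt (fun y => √(1 - y ^ 2)) (-(2 * x) / (2 * √(1 - x ^ 2))) x := by
    refine HasDerivAt.sqrt ?_ hp.ne'
    simpa using (hasDerivAt_pow 2 x).const_sub 1
  refine ((hsqrt.neg.add ((Real.hasDerivAt_arcsin hx₁.ne' hx₂.ne).const_mul a)).sub
    ((hasDerivAt_arcsin_moebius ha hx).const_mul _)).congr_deriv ?_
  field_simp
  rw [Real.sq_sqrt (by nlinarith), Real.sq_sqrt hp.le]
  ring

theorem integral_sqrt_one_sub_sq_div_sub (ha : 1 < a) :
    ∫ x in (-1 : ℝ)..1, √(1 - x ^ 2) / (a - x) = π * (a - √(a ^ 2 - 1)) := by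
  have hax : ∀ x ∈ Icc (-1 : ℝ) 1, a - x ≠ 0 := fun x hx => by linarith [hx.2]
  rw [intervalIntegral.integral_eq_sub_of_hasDerivAt_of_le (by norm_num) ?_
    (fun x hx => hasDerivAt_sqrt_one_sub_sq_div_sub_antideriv ha hx) ?_]
  · have e₁ : (a * 1 - 1) / (a - 1) = 1 := by rw [mul_one, div_self (by linarith)]
    have e₂ : (a * -1 - 1) / (a - -1) = -1 := by rw [div_eq_iff (by linarith)]; ring
    simp only [e₁, e₂, arcsin_one, arcsin_neg_one]
    norm_num
    ring
  · exact ContinuousOn.sub (by fun_prop) (continuousOn_const.mul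
      (continuous_arcsin.comp_continuousOn (by fun_prop (disch := exact hax _ ‹_›))))
  · exact (ContinuousOn.div (by fun_prop) (by fun_prop) hax).intervalIntegrable_of_Icc
      (by norm_num)

end ArcsinAntiderivative

section Semicircle

variable {E : Type*} [NormedAddCommGroup E] [NormedSpace ℝ E] {β : ℝ}

theorem integral_semicircleLaw (hβ : 0 < β) (g : ℝ → E) :
    ∫ x, g x ∂semicircleLaw β
      = (2 / π) • ∫ t in (-1 : ℝ)..1, √(1 - t ^ 2) • g (2 * √β * t + 1) := by
  have hs : 0 < √β := Real.sqrt_pos.2 hβ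
  have hs2 : √β ^ 2 = β := Real.sq_sqrt hβ.le
  set F : ℝ → E := fun x => (√(4 * β - (1 - x) ^ 2) / (2 * β * π)) • g x
  have hdensity : ∀ t : ℝ,
      √(1 - t ^ 2) • g (2 * √β * t + 1) = (√β * π) • F (2 * √β * t + 1) := by
    intro t
    have hrescale : 4 * β - (1 - (2 * √β * t + 1)) ^ 2 = (2 * √β) ^ 2 * (1 - t ^ 2) := by
      linear_combination 4 * hs2.symm
    rw [smul_smul, hrescale, Real.sqrt_mul (by positivity), Real.sqrt_sq (by positivity)]
    congr 1
    field_simp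
    rw [hs2]
  rw [semicircleLaw, integral_withDensity_ofReal_indicator_Icc (by linarith)
    (by fun_prop) (fun x _ => by positivity)]
  simp_rw [hdensity]
  rw [intervalIntegral.integral_smul,
    intervalIntegral.integral_comp_mul_add F (by positivity : 2 * √β ≠ 0) 1, smul_smul, smul_smul]
  have hc : 2 / π * (√β * π) * (2 * √β)⁻¹ = 1 := by field_simp
  rw [hc, one_smul, mul_neg_one, mul_one, ← sub_eq_neg_add, add_comm]

theorem isProbabilityMeasure_semicircleLaw (hβ : 0 < β) :
    IsProbabilityMeasure (semicircleLaw β) := by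
  have : IsFiniteMeasure (semicircleLaw β) :=
    isFiniteMeasure_withDensity_ofReal_indicator_Icc (by fun_prop)
  refine isProbabilityMeasure_of_integral_one ?_
  rw [integral_semicircleLaw hβ]
  simp only [smul_eq_mul, mul_one]
  rw [integral_sqrt_one_sub_sq]
  field_simp

theorem integral_inv_sub_semicircleLaw (hβ : 0 < β) {ξ : ℝ} (hξ : 1 + 2 * √β < ξ) :
    ∫ x, (ξ - x)⁻¹ ∂semicircleLaw β = (ξ - 1 - √((ξ - 1) ^ 2 - 4 * β)) / (2 * β) := by
  have hs : 0 < √β := Real.sqrt_pos.2 hβ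
  have hs2 : √β ^ 2 = β := Real.sq_sqrt hβ.le
  obtain ⟨a, rfl⟩ : ∃ a, ξ = 2 * √β * a + 1 := ⟨(ξ - 1) / (2 * √β), by field_simp; ring⟩
  have ha : 1 < a := by nlinarith
  have hpoint : ∀ t, √(1 - t ^ 2) • (2 * √β * a + 1 - (2 * √β * t + 1))⁻¹
      = (2 * √β)⁻¹ * (√(1 - t ^ 2) / (a - t)) := by
    intro t
    rw [smul_eq_mul, show 2 * √β * a + 1 - (2 * √β * t + 1) = 2 * √β * (a - t) by ring]
    field_simp
  have hdisc : √((2 * √β * a + 1 - 1) ^ 2 - 4 * β) = 2 * √β * √(a ^ 2 - 1) := by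
    rw [show (2 * √β * a + 1 - 1) ^ 2 - 4 * β = (2 * √β) ^ 2 * (a ^ 2 - 1) by
      linear_combination 4 * hs2, Real.sqrt_mul (by positivity), Real.sqrt_sq (by positivity)]
  rw [integral_semicircleLaw hβ, hdisc]
  simp only [hpoint]
  rw [intervalIntegral.integral_const_mul, integral_sqrt_one_sub_sq_div_sub ha, smul_eq_mul]
  field_simp
  linear_combination (-2) * (a - √(a ^ 2 - 1)) * hs2

end Semicircle

/-- `SC(1,β)` is a probability measure and, for real `ξ > 1 + 2√β`, its Cauchy transform
`Γ(ξ) = ∫ (ξ − x)⁻¹ dν_β(x)` satisfies `βΓ² + (1 − ξ)Γ + 1 = 0`; explicitly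
`Γ(ξ) = (ξ − 1 − √((ξ−1)² − 4β))/(2β)`. -/
theorem semicircleLaw_isProbability_and_cauchyTransform (β : ℝ) (hβ : 0 < β) :
    IsProbabilityMeasure (semicircleLaw β) ∧
    ∀ ξ : ℝ, 1 + 2 * Real.sqrt β < ξ →
      β * (∫ x, (ξ - x)⁻¹ ∂(semicircleLaw β)) ^ 2
          + (1 - ξ) * (∫ x, (ξ - x)⁻¹ ∂(semicircleLaw β)) + 1 = 0 ∧
      (∫ x, (ξ - x)⁻¹ ∂(semicircleLaw β))
          = (ξ - 1 - Real.sqrt ((ξ - 1) ^ 2 - 4 * β)) / (2 * β) := by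
  refine ⟨isProbabilityMeasure_semicircleLaw hβ, fun ξ hξ => ?_⟩
  rw [integral_inv_sub_semicircleLaw hβ hξ]
  refine ⟨?_, rfl⟩
  have hdisc : 0 ≤ (ξ - 1) ^ 2 - 4 * β := by
    nlinarith [Real.sq_sqrt hβ.le, Real.sqrt_nonneg β]
  set Γ := (ξ - 1 - √((ξ - 1) ^ 2 - 4 * β)) / (2 * β)
  have hroot := (quadratic_eq_zero_iff hβ.ne' (b := 1 - ξ) (c := 1) (s := √((ξ - 1) ^ 2 - 4 * β))
    (by rw [discrim, Real.mul_self_sqrt hdisc]; ring) Γ).2 (Or.inr (by ring))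
  linear_combination hroot
end

section
/- Fix a real number t > 0 and an integer p ≥ 1. Then lim_{n→∞} M_p(t/n, n) = Σ t^{#σ}, where the sum on the right runs over all geodesic permutations σ ∈ S_p all of whose orbits have even cardinality (in particular the limit is 0 when p is odd). These are the moments of the modified free Bessel law, the free difference of two free Poisson laws each of parameter t/2. -/
open scoped Classical

/-- With `m = t/n` and `n → ∞`, the moments `M_p(t/n, n)` converge to `Σ t^{#σ}`, the sum
running over geodesic permutations all of whose orbits have even cardinality (these are
the moments of the modified free Bessel law, the free difference of two free Poisson laws
each of parameter `t/2`). -/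
theorem tendsto_M_freeBessel (t : ℝ) (ht : 0 < t) (p : ℕ) (hp : 1 ≤ p) :
    Filter.Tendsto (fun n : ℝ => M (t / n) n p) Filter.atTop
      (nhds (∑ σ : Equiv.Perm (Fin p),
        if IsGeodesic (finRotate p) σ ∧ numEvenOrbits σ = numOrbits σ
          then t ^ numOrbits σ else 0)) := by
  obtain ⟨q, rfl⟩ : ∃ q, p = q + 1 := ⟨p - 1, (Nat.succ_pred_eq_of_pos hp).symm⟩
  simp only [M]
  apply tendsto_finset_sum
  intro σ _
  by_cases hG : IsGeodesic (finRotate (q + 1)) σ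
  · simp only [hG, if_true, true_and]
    by_cases he : numEvenOrbits σ = numOrbits σ
    · simp only [he, if_true]
      apply Filter.Tendsto.congr'
        (f₁ := fun _ : ℝ => t ^ numOrbits σ)
      · filter_upwards [Filter.eventually_ge_atTop (1 : ℝ)] with n hn
        have hn0 : n ≠ 0 := by linarith
        rw [← mul_pow, div_mul_cancel₀ _ hn0]
      · exact tendsto_const_nhds
    · simp only [he, if_false]
      have hlt : numEvenOrbits σ < numOrbits σ :=
        lt_of_le_of_ne (le_trans (Multiset.card_le_card (Multiset.filter_le _ _))
          (Nat.le_add_left _ _)) he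
      have key : Filter.Tendsto
          (fun n : ℝ => t ^ numOrbits σ * (n ^ (numOrbits σ - numEvenOrbits σ))⁻¹)
          Filter.atTop (nhds 0) := by
        have := (Filter.tendsto_pow_atTop (α := ℝ) (n := numOrbits σ - numEvenOrbits σ)
          (by omega)).inv_tendsto_atTop
        simpa using (tendsto_const_nhds (x := t ^ numOrbits σ)).mul this
      apply key.congr'
      filter_upwards [Filter.eventually_ge_atTop (1 : ℝ)] with n hn
      have hn0 : n ≠ 0 := by linarith
      rw [div_pow, div_mul_eq_mul_div, mul_comm, mul_div_assoc, mul_comm]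
      congr 1
      rw [eq_div_iff (pow_ne_zero _ hn0), inv_mul_eq_div, div_eq_iff (pow_ne_zero _ hn0),
        ← pow_add]
      congr 1
      omega
  · simp only [hG, if_false, false_and]
    exact tendsto_const_nhds
end

section
/- There is exactly one pair (m, n) of real numbers with m > 0 and n > 1 satisfying both P(m,n) = 0 and n = m/4 + 1/m; it is given by n₀ = √(14/(3√3) − 5/3) and m₀ = (9/77)·(23n₀ − 3n₀³). In other words, the curves n = g(m) and n = h(m) = m/4 + 1/m intersect in exactly one point in the region m > 0, n > 1. -/
/-- `P(m,n) = m³n³ + 15m²n² + 48mn − 27m² − 64`. -/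
noncomputable def P (m n : ℝ) : ℝ :=
  m ^ 3 * n ^ 3 + 15 * m ^ 2 * n ^ 2 + 48 * m * n - 27 * m ^ 2 - 64

/-!
On the curve `n = m/4 + 1/m` we have `mn = m²/4 + 1`, and `P` collapses to
`m²/64 · ((m² + 36)² − 1728)`. Its only positive root is `m₀ = √(24√3 − 36)`, so the
intersection is the single point `(m₀, n₀)` with `n₀ = m₀/4 + 1/m₀`. The closed forms come
from `n₀² = (14√3 − 15)/9` and `m₀ = (6/11)(6 − √3) n₀`, the latter rewritten as a cubic in `n₀`.
-/
lemma P_div_four_add_inv {m : ℝ} (hm : m ≠ 0) :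
    P m (m / 4 + 1 / m) = m ^ 2 / 64 * ((m ^ 2 + 36) ^ 2 - 1728) := by
  unfold P
  field_simp
  ring

lemma sqrt_three_sq : √3 ^ 2 = 3 := Real.sq_sqrt (by norm_num)

lemma twelve_div_seven_lt_sqrt_three : 12 / 7 < √3 :=
  (Real.lt_sqrt (by norm_num)).2 (by norm_num)

namespace UniqueIntersection

noncomputable def m₀ : ℝ := √(24 * √3 - 36)

noncomputable def n₀ : ℝ := √(14 / (3 * √3) - 5 / 3)

lemma m₀_sq : m₀ ^ 2 = 24 * √3 - 36 :=
  Real.sq_sqrt (by linarith [twelve_div_seven_lt_sqrt_three])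

lemma m₀_pos : 0 < m₀ :=
  Real.sqrt_pos.2 (by linarith [twelve_div_seven_lt_sqrt_three])

lemma n₀_sq : n₀ ^ 2 = (14 * √3 - 15) / 9 := by
  have h : 14 / (3 * √3) - 5 / 3 = (14 * √3 - 15) / 9 := by
    field_simp
    linear_combination -42 * sqrt_three_sq
  rw [n₀, h, Real.sq_sqrt (by linarith [twelve_div_seven_lt_sqrt_three])]

lemma n₀_nonneg : 0 ≤ n₀ := Real.sqrt_nonneg _

lemma div_four_add_inv_m₀ : m₀ / 4 + 1 / m₀ = n₀ := by
  have hm := m₀_pos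
  refine (pow_left_inj₀ (by positivity) n₀_nonneg two_ne_zero).1 ?_
  rw [n₀_sq]
  field_simp
  rw [m₀_sq]
  linear_combination -192 * sqrt_three_sq

lemma P_div_four_add_inv_eq_zero_iff {m : ℝ} (hm : 0 < m) :
    P m (m / 4 + 1 / m) = 0 ↔ m = m₀ := by
  have hroot : (m ^ 2 + 36) ^ 2 = 1728 ↔ m ^ 2 = m₀ ^ 2 := by
    rw [m₀_sq, show (1728 : ℝ) = (24 * √3) ^ 2 by linear_combination -576 * sqrt_three_sq,
      sq_eq_sq₀ (by positivity) (by positivity)]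
    constructor <;> intro h <;> linarith
  rw [P_div_four_add_inv hm.ne', mul_eq_zero, sub_eq_zero, hroot,
    sq_eq_sq₀ hm.le m₀_pos.le]
  simp [hm.ne']

lemma m₀_mul_n₀ : m₀ * n₀ = 6 * √3 - 8 := by
  have := m₀_pos.ne'
  rw [← div_four_add_inv_m₀]
  field_simp
  linear_combination m₀_sq

lemma cubic_n₀ : 9 / 77 * (23 * n₀ - 3 * n₀ ^ 3) = m₀ := by
  refine mul_left_cancel₀ m₀_pos.ne' ?_
  linear_combination 9 / 77 * (23 - 3 * n₀ ^ 2) * m₀_mul_n₀ - 27 / 77 * (6 * √3 - 8) * n₀_sq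
    - m₀_sq - 36 / 11 * sqrt_three_sq

lemma one_lt_n₀ : 1 < n₀ := by
  refine (one_lt_sq_iff₀ n₀_nonneg).1 ?_
  rw [n₀_sq]
  linarith [twelve_div_seven_lt_sqrt_three]

lemma intersection_iff (m n : ℝ) :
    (0 < m ∧ 1 < n ∧ P m n = 0 ∧ n = m / 4 + 1 / m) ↔ m = m₀ ∧ n = n₀ := by
  constructor
  · rintro ⟨hm, -, hP, rfl⟩
    obtain rfl := (P_div_four_add_inv_eq_zero_iff hm).1 hP
    exact ⟨rfl, div_four_add_inv_m₀⟩
  · rintro ⟨rfl, rfl⟩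
    refine ⟨m₀_pos, one_lt_n₀, ?_, div_four_add_inv_m₀.symm⟩
    rw [← div_four_add_inv_m₀, P_div_four_add_inv_eq_zero_iff m₀_pos]

end UniqueIntersection

open UniqueIntersection in
/-- There is exactly one pair `(m, n)` with `m > 0`, `n > 1`, `P(m,n) = 0` and
`n = m/4 + 1/m`; it is given by `n₀ = √(14/(3√3) − 5/3)`, `m₀ = (9/77)(23n₀ − 3n₀³)`. -/
theorem unique_intersection_g_h :
    ∀ m n : ℝ,
      (0 < m ∧ 1 < n ∧ P m n = 0 ∧ n = m / 4 + 1 / m) ↔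
      (n = Real.sqrt (14 / (3 * Real.sqrt 3) - 5 / 3) ∧
        m = (9 / 77) * (23 * n - 3 * n ^ 3)) := by
  intro m n
  rw [intersection_iff]
  constructor
  · rintro ⟨rfl, rfl⟩
    exact ⟨rfl, cubic_n₀.symm⟩
  · rintro ⟨rfl, rfl⟩
    exact ⟨cubic_n₀, rfl⟩
end
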